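/- arXiv:2007.12907 — 4 statements merged into one kernel-verified Lean document; each statement's English description precedes it below -/
import Mathlib

section
/- Let p ≥ 2, q ≥ 2p − 2, q > 2, with the additional assumption q ≥ 2p − 1 if 2 ≤ p < 3. Let k = 1 if p ≥ 3 and k = 2 if 2 ≤ p < 3. If C₁, C₂, C₄ > 0, C₅ ≥ 0 and C₃ ∈ ℝ, then the function f_k : (0,∞) → ℝ, f_k(t) = C₁ t^{2(k−1)} + C₂ t^{2k} + C₃ t^{2(kp−2)} − C₄ t^{2(kp−2)} log t − C₅ t^{kq−2}, has a unique positive critical point t_k, and f_k'(t) > 0 for 0 < t < t_k while f_k'(t) < 0 for t > t_k. -/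
/-!
Write `f(t) = C₁ t^{a₁} + C₂ t^{a₂} + C₃ t^{a₃} - C₄ t^{a₃} log t - C₅ t^{a₄}`. Then
`f'(t) = t^{a₃-1} g(t)` with
`g(t) = a₁C₁ t^{a₁-a₃} + a₂C₂ t^{a₂-a₃} + (a₃C₃ - C₄) - a₃C₄ log t - a₄C₅ t^{a₄-a₃}`.
When `0 ≤ a₁, a₂ ≤ a₃ ≤ a₄` and `a₃ > 0`, every term of `g` is antitone and `-a₃C₄ log t` is
strictly decreasing from `+∞` to `-∞`, so `g` has exactly one positive zero, where `f'` changes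
sign from `+` to `-`. For `k = 1, 2` the hypotheses on `p, q` are exactly these inequalities for
`a₁ = 2(k-1)`, `a₂ = 2k`, `a₃ = 2(kp-2)`, `a₄ = kq-2`.
-/

open Real Set Filter Topology

theorem existsUnique_deriv_sign_change {f g w : ℝ → ℝ}
    (hfg : ∀ t, 0 < t → deriv f t = w t * g t) (hw : ∀ t, 0 < t → 0 < w t)
    (hg : StrictAntiOn g (Ioi 0)) (hgc : ContinuousOn g (Ioi 0))
    (hg_zero : Tendsto g (𝓝[>] 0) atTop) (hg_top : Tendsto g atTop atBot) :
    ∃! tk : ℝ, 0 < tk ∧ deriv f tk = 0 ∧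
        (∀ t : ℝ, 0 < t → t < tk → 0 < deriv f t) ∧
        (∀ t : ℝ, tk < t → deriv f t < 0) := by
  obtain ⟨t₀, hg₀, ht₀⟩ := ((hg_zero.eventually_gt_atTop 0).and self_mem_nhdsWithin).exists
  obtain ⟨t₁, hg₁, ht₁⟩ := ((hg_top.eventually_lt_atBot 0).and (eventually_gt_atTop 0)).exists
  have ht₀₁ : t₀ ≤ t₁ := le_of_lt <| (hg.lt_iff_gt ht₁ ht₀).1 (hg₁.trans hg₀)
  obtain ⟨tk, htk, hgk⟩ : ∃ tk ∈ Icc t₀ t₁, g tk = 0 :=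
    intermediate_value_Icc' ht₀₁ (hgc.mono fun x hx => lt_of_lt_of_le ht₀ hx.1)
      ⟨hg₁.le, hg₀.le⟩
  have htk₀ : 0 < tk := lt_of_lt_of_le ht₀ htk.1
  have hpos : ∀ t, 0 < t → t < tk → 0 < deriv f t := fun t ht htt => by
    rw [hfg t ht]
    exact mul_pos (hw t ht) (hgk ▸ hg ht htk₀ htt)
  have hneg : ∀ t, tk < t → deriv f t < 0 := fun t htt => by
    have ht : 0 < t := htk₀.trans htt
    rw [hfg t ht]
    exact mul_neg_of_pos_of_neg (hw t ht) (hgk ▸ hg htk₀ ht htt)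
  refine ⟨tk, ⟨htk₀, by rw [hfg tk htk₀, hgk, mul_zero], hpos, hneg⟩, ?_⟩
  rintro t ⟨ht, hft, -, -⟩
  rcases lt_trichotomy t tk with htt | htt | htt
  · exact absurd hft (hpos t ht htt).ne'
  · exact htt
  · exact absurd hft (hneg t htt).ne

section

variable {A B D E H a b d : ℝ}

theorem strictAntiOn_rpow_sub_log (hA : 0 ≤ A) (hB : 0 ≤ B) (hE : 0 < E) (hH : 0 ≤ H)
    (ha : a ≤ 0) (hb : b ≤ 0) (hd : 0 ≤ d) :
    StrictAntiOn (fun t => A * t ^ a + B * t ^ b + D - E * log t - H * t ^ d) (Ioi 0) := by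
  intro s hs t ht hst
  have h₁ : t ^ a ≤ s ^ a := rpow_le_rpow_of_nonpos hs hst.le ha
  have h₂ : t ^ b ≤ s ^ b := rpow_le_rpow_of_nonpos hs hst.le hb
  have h₃ : log s < log t := log_lt_log hs hst
  have h₄ : s ^ d ≤ t ^ d := rpow_le_rpow (le_of_lt hs) hst.le hd
  dsimp only
  linarith [mul_le_mul_of_nonneg_left h₁ hA, mul_le_mul_of_nonneg_left h₂ hB,
    mul_lt_mul_of_pos_left h₃ hE, mul_le_mul_of_nonneg_left h₄ hH]

theorem tendsto_rpow_sub_log_nhdsGT_zero (hA : 0 ≤ A) (hB : 0 ≤ B) (hE : 0 < E) (hH : 0 ≤ H)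
    (hd : 0 ≤ d) :
    Tendsto (fun t => A * t ^ a + B * t ^ b + D - E * log t - H * t ^ d) (𝓝[>] 0) atTop := by
  have h : Tendsto (fun t => (D - H) + E * -log t) (𝓝[>] 0) atTop :=
    tendsto_atTop_add_const_left _ _
      ((tendsto_neg_atBot_atTop.comp tendsto_log_nhdsGT_zero).const_mul_atTop hE)
  refine tendsto_atTop_mono' _ ?_ h
  filter_upwards [Ioo_mem_nhdsGT one_pos] with t ⟨ht₀, ht₁⟩
  have : t ^ d ≤ 1 := rpow_le_one ht₀.le ht₁.le hd
  linarith [mul_nonneg hA (rpow_pos_of_pos ht₀ a).le, mul_nonneg hB (rpow_pos_of_pos ht₀ b).le,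
    mul_le_mul_of_nonneg_left this hH]

theorem tendsto_rpow_sub_log_atTop (hA : 0 ≤ A) (hB : 0 ≤ B) (hE : 0 < E) (hH : 0 ≤ H)
    (ha : a ≤ 0) (hb : b ≤ 0) :
    Tendsto (fun t => A * t ^ a + B * t ^ b + D - E * log t - H * t ^ d) atTop atBot := by
  have h : Tendsto (fun t => (A + B + D) + -(E * log t)) atTop atBot :=
    tendsto_atBot_add_const_left _ _
      (tendsto_neg_atTop_atBot.comp (tendsto_log_atTop.const_mul_atTop hE))
  refine tendsto_atBot_mono' _ ?_ h
  filter_upwards [eventually_ge_atTop 1] with t ht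
  have ht₀ : 0 < t := one_pos.trans_le ht
  linarith [mul_le_mul_of_nonneg_left (rpow_le_one_of_one_le_of_nonpos ht ha) hA,
    mul_le_mul_of_nonneg_left (rpow_le_one_of_one_le_of_nonpos ht hb) hB,
    mul_nonneg hH (rpow_pos_of_pos ht₀ d).le]

theorem continuousOn_rpow_sub_log :
    ContinuousOn (fun t => A * t ^ a + B * t ^ b + D - E * log t - H * t ^ d) (Ioi 0) := by
  intro t ht
  have ht' : t ≠ 0 := ne_of_gt ht
  exact ContinuousAt.continuousWithinAt (by fun_prop (disch := exact Or.inl ht'))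

end

section

variable {a₁ a₂ a₃ a₄ C₁ C₂ C₃ C₄ C₅ t : ℝ}

theorem hasDerivAt_rpow_sub_rpow_mul_log (ht : 0 < t) :
    HasDerivAt (fun t => C₁ * t ^ a₁ + C₂ * t ^ a₂ + C₃ * t ^ a₃
        - C₄ * t ^ a₃ * log t - C₅ * t ^ a₄)
      (t ^ (a₃ - 1) * (a₁ * C₁ * t ^ (a₁ - a₃) + a₂ * C₂ * t ^ (a₂ - a₃) + (a₃ * C₃ - C₄)
        - a₃ * C₄ * log t - a₄ * C₅ * t ^ (a₄ - a₃))) t := by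
  have hpow : ∀ a, HasDerivAt (fun t => t ^ a) (t ^ (a₃ - 1) * (a * t ^ (a - a₃))) t := by
    intro a
    convert hasDerivAt_rpow_const (p := a) (Or.inl ht.ne') using 1
    rw [mul_left_comm, ← rpow_add ht]
    ring_nf
  have hlog : t ^ a₃ * t⁻¹ = t ^ (a₃ - 1) := by
    rw [← rpow_neg_one, ← rpow_add ht, sub_eq_add_neg]
  refine (((((hpow a₁).const_mul C₁).add ((hpow a₂).const_mul C₂)).add
    ((hpow a₃).const_mul C₃)).sub (((hpow a₃).const_mul C₄).mul (hasDerivAt_log ht.ne'))).sub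
    ((hpow a₄).const_mul C₅) |>.congr_deriv ?_
  rw [sub_self, rpow_zero, ← hlog]
  ring

theorem existsUnique_deriv_rpow_sub_rpow_mul_log {f : ℝ → ℝ}
    (h₁ : 0 ≤ a₁) (h₁₃ : a₁ ≤ a₃) (h₂ : 0 ≤ a₂) (h₂₃ : a₂ ≤ a₃) (h₃ : 0 < a₃) (h₃₄ : a₃ ≤ a₄)
    (hC₁ : 0 ≤ C₁) (hC₂ : 0 ≤ C₂) (hC₄ : 0 < C₄) (hC₅ : 0 ≤ C₅)
    (hf : ∀ t, 0 < t →
      f t = C₁ * t ^ a₁ + C₂ * t ^ a₂ + C₃ * t ^ a₃ - C₄ * t ^ a₃ * log t - C₅ * t ^ a₄) :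
    ∃! tk : ℝ, 0 < tk ∧ deriv f tk = 0 ∧
        (∀ t : ℝ, 0 < t → t < tk → 0 < deriv f t) ∧
        (∀ t : ℝ, tk < t → deriv f t < 0) := by
  have hA : 0 ≤ a₁ * C₁ := mul_nonneg h₁ hC₁
  have hB : 0 ≤ a₂ * C₂ := mul_nonneg h₂ hC₂
  have hE : 0 < a₃ * C₄ := mul_pos h₃ hC₄
  have hH : 0 ≤ a₄ * C₅ := mul_nonneg (h₃.le.trans h₃₄) hC₅
  have ha : a₁ - a₃ ≤ 0 := by linarith
  have hb : a₂ - a₃ ≤ 0 := by linarith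
  have hd : 0 ≤ a₄ - a₃ := by linarith
  refine existsUnique_deriv_sign_change (w := fun t => t ^ (a₃ - 1)) (fun t ht => ?_)
    (fun t ht => rpow_pos_of_pos ht _)
    (strictAntiOn_rpow_sub_log (D := a₃ * C₃ - C₄) hA hB hE hH ha hb hd)
    continuousOn_rpow_sub_log (tendsto_rpow_sub_log_nhdsGT_zero hA hB hE hH hd)
    (tendsto_rpow_sub_log_atTop hA hB hE hH ha hb)
  refine (hasDerivAt_rpow_sub_rpow_mul_log ht).congr_of_eventuallyEq ?_ |>.deriv
  filter_upwards [Ioi_mem_nhds ht] with s hs using hf s hs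

end

theorem stmt8_general (p q : ℝ) (k : ℕ) (hq1 : 2 * p - 2 ≤ q)
    (hk : (3 ≤ p ∧ k = 1) ∨ (2 ≤ p ∧ p < 3 ∧ k = 2))
    (hq3 : p < 3 → 2 * p - 1 ≤ q)
    (C1 C2 C4 : ℝ) (hC1 : 0 < C1) (hC2 : 0 < C2) (hC4 : 0 < C4)
    (C5 : ℝ) (hC5 : 0 ≤ C5) (C3 : ℝ)
    (f : ℝ → ℝ)
    (hf : ∀ t : ℝ, 0 < t →
      f t = C1 * t ^ (2 * ((k : ℝ) - 1)) + C2 * t ^ (2 * (k : ℝ))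
          + C3 * t ^ (2 * ((k : ℝ) * p - 2))
          - C4 * t ^ (2 * ((k : ℝ) * p - 2)) * Real.log t
          - C5 * t ^ ((k : ℝ) * q - 2)) :
    ∃! tk : ℝ, 0 < tk ∧ deriv f tk = 0 ∧
        (∀ t : ℝ, 0 < t → t < tk → 0 < deriv f t) ∧
        (∀ t : ℝ, tk < t → deriv f t < 0) := by
  refine existsUnique_deriv_rpow_sub_rpow_mul_log ?_ ?_ ?_ ?_ ?_ ?_ hC1.le hC2.le hC4 hC5 hf
  all_goals
    rcases hk with ⟨hp, rfl⟩ | ⟨hp, hp3, rfl⟩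
    · push_cast; linarith
    · push_cast; linarith [hq3 hp3]

/-- Calculus lemma: for `p ≥ 2`, `q ≥ 2p−2`, `q > 2` (and `q ≥ 2p−1` when
`2 ≤ p < 3`), with `k = 1` iff `p ≥ 3` and `k = 2` iff `2 ≤ p < 3`,
and constants `C₁, C₂, C₄ > 0`, `C₅ ≥ 0`, `C₃ ∈ ℝ`, the function
`f(t) = C₁ t^{2(k−1)} + C₂ t^{2k} + C₃ t^{2(kp−2)} − C₄ t^{2(kp−2)} log t − C₅ t^{kq−2}`
has a unique positive critical point `tₖ`, with `f' > 0` on `(0,tₖ)` and `f' < 0`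
on `(tₖ,∞)`. -/
theorem stmt8 (p q : ℝ) (k : ℕ) (hp : 2 ≤ p) (hq2 : 2 < q) (hq1 : 2 * p - 2 ≤ q)
    (hk : (3 ≤ p ∧ k = 1) ∨ (2 ≤ p ∧ p < 3 ∧ k = 2))
    (hq3 : p < 3 → 2 * p - 1 ≤ q)
    (C1 C2 C4 : ℝ) (hC1 : 0 < C1) (hC2 : 0 < C2) (hC4 : 0 < C4)
    (C5 : ℝ) (hC5 : 0 ≤ C5) (C3 : ℝ)
    (f : ℝ → ℝ)
    (hf : ∀ t : ℝ, 0 < t →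
      f t = C1 * t ^ (2 * ((k : ℝ) - 1)) + C2 * t ^ (2 * (k : ℝ))
          + C3 * t ^ (2 * ((k : ℝ) * p - 2))
          - C4 * t ^ (2 * ((k : ℝ) * p - 2)) * Real.log t
          - C5 * t ^ ((k : ℝ) * q - 2)) :
    ∃! tk : ℝ, 0 < tk ∧ deriv f tk = 0 ∧
        (∀ t : ℝ, 0 < t → t < tk → 0 < deriv f t) ∧
        (∀ t : ℝ, tk < t → deriv f t < 0) :=
  stmt8_general p q k hq1 hk hq3 C1 C2 C4 hC1 hC2 hC4 C5 hC5 C3 f hf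
end

section
/- Let u ∈ L^p(ℝ²) (p ≥ 2), let A ⊂ B_R(0) be a measurable set of positive measure, and suppose v ∈ L^p(ℝ²) and u satisfies |u| ≥ δ/2 > 0 on A. Then ∫∫ log(1+|x−y|) |u(x)|^p |v(y)|^p dx dy ≥ (|A|/2)(δ/2)^p ( ‖v‖_{L^p(μ)}^p − log(1+2R) ‖v‖_{L^p}^p ), where μ = log(1+|x|)dx. -/
/-!
Since `1 + ‖·‖` is submultiplicative, `log (1 + ‖y‖) ≤ log (1 + ‖x‖) + log (1 + ‖x - y‖)`, so for
`‖x‖ ≤ R` the kernel `log (1 + ‖x - y‖)` dominates `(log (1 + ‖y‖) - log (1 + 2R)) / 2`, whose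
integral against `|v|^p` is the bracket of the claim. Integrating this in `y` bounds the inner
integral from below for every `x ∈ A`, where also `|u x|^p ≥ (δ/2)^p`, and integrating over `A`
gives the factor `|A|`.
-/

open MeasureTheory

theorem ENNReal.ofReal_integral_le_lintegral_ofReal {α : Type*} [MeasurableSpace α]
    {μ : Measure α} {f : α → ℝ} (hf : Integrable f μ) :
    ENNReal.ofReal (∫ a, f a ∂μ) ≤ ∫⁻ a, ENNReal.ofReal (f a) ∂μ := by
  rw [integral_eq_lintegral_pos_part_sub_lintegral_neg_part hf]
  calc _ ≤ ENNReal.ofReal (∫⁻ a, ENNReal.ofReal (f a) ∂μ).toReal :=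
        ENNReal.ofReal_le_ofReal (sub_le_self _ ENNReal.toReal_nonneg)
    _ ≤ _ := ENNReal.ofReal_toReal_le

theorem Real.log_one_add_norm_le {E : Type*} [SeminormedAddCommGroup E] (x y : E) :
    Real.log (1 + ‖y‖) ≤ Real.log (1 + ‖x‖) + Real.log (1 + ‖x - y‖) := by
  have hy : ‖y‖ ≤ ‖x‖ + ‖x - y‖ := by
    simpa [norm_sub_rev y x, add_comm] using norm_sub_le_norm_sub_add_norm_sub y x 0
  rw [← Real.log_mul (by positivity) (by positivity)]
  exact Real.log_le_log (by positivity) (by nlinarith [norm_nonneg x, norm_nonneg (x - y)])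

theorem Real.log_one_add_norm_sub_ge_of_norm_le {E : Type*} [SeminormedAddCommGroup E]
    {R : ℝ} {x : E} (hx : ‖x‖ ≤ R) (y : E) :
    (Real.log (1 + ‖y‖) - Real.log (1 + 2 * R)) / 2 ≤ Real.log (1 + ‖x - y‖) := by
  have hxR : Real.log (1 + ‖x‖) ≤ Real.log (1 + 2 * R) :=
    Real.log_le_log (by positivity) (by linarith [norm_nonneg x])
  have hxy : 0 ≤ Real.log (1 + ‖x - y‖) := Real.log_nonneg (by linarith [norm_nonneg (x - y)])
  linarith [Real.log_one_add_norm_le x y]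

theorem lintegral_log_one_add_norm_sub_mul_ge {E : Type*} [SeminormedAddCommGroup E]
    [MeasurableSpace E] {μ : Measure E} {f : E → ℝ} (hf : Integrable f μ)
    (hwf : Integrable (fun y => Real.log (1 + ‖y‖) * f y) μ) (hf0 : 0 ≤ f)
    {R : ℝ} {x : E} (hx : ‖x‖ ≤ R) :
    ENNReal.ofReal
        (((∫ y, Real.log (1 + ‖y‖) * f y ∂μ) - Real.log (1 + 2 * R) * ∫ y, f y ∂μ) / 2) ≤
      ∫⁻ y, ENNReal.ofReal (Real.log (1 + ‖x - y‖) * f y) ∂μ := by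
  have hint : Integrable
      (fun y => (Real.log (1 + ‖y‖) * f y - Real.log (1 + 2 * R) * f y) / 2) μ :=
    (hwf.sub (hf.const_mul _)).div_const 2
  calc _ = ENNReal.ofReal
        (∫ y, (Real.log (1 + ‖y‖) * f y - Real.log (1 + 2 * R) * f y) / 2 ∂μ) := by
        rw [integral_div, integral_sub hwf (hf.const_mul _), integral_const_mul]
    _ ≤ ∫⁻ y, ENNReal.ofReal
        ((Real.log (1 + ‖y‖) * f y - Real.log (1 + 2 * R) * f y) / 2) ∂μ :=
        ENNReal.ofReal_integral_le_lintegral_ofReal hint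
    _ ≤ _ := by
      refine lintegral_mono fun y => ENNReal.ofReal_le_ofReal ?_
      calc (Real.log (1 + ‖y‖) * f y - Real.log (1 + 2 * R) * f y) / 2
          = (Real.log (1 + ‖y‖) - Real.log (1 + 2 * R)) / 2 * f y := by ring
        _ ≤ Real.log (1 + ‖x - y‖) * f y :=
          mul_le_mul_of_nonneg_right (Real.log_one_add_norm_sub_ge_of_norm_le hx y) (hf0 y)

theorem stmt12_general (p : ℝ) (hp : 2 ≤ p) (δ R : ℝ) (hδ : 0 < δ)
    (u v : EuclideanSpace ℝ (Fin 2) → ℝ)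
    (A : Set (EuclideanSpace ℝ (Fin 2))) (hA : MeasurableSet A)
    (hAR : A ⊆ Metric.ball 0 R)
    (huA : ∀ x ∈ A, δ / 2 ≤ |u x|)
    (hv1 : Integrable (fun y => |v y| ^ p))
    (hv2 : Integrable (fun y => Real.log (1 + ‖y‖) * |v y| ^ p)) :
    ENNReal.ofReal
        (((volume A).toReal / 2) * (δ / 2) ^ p *
          ((∫ y, Real.log (1 + ‖y‖) * |v y| ^ p)
            - Real.log (1 + 2 * R) * ∫ y, |v y| ^ p)) ≤
      ∫⁻ x, ∫⁻ y, ENNReal.ofReal (Real.log (1 + ‖x - y‖) * |u x| ^ p * |v y| ^ p) := by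
  set K : ℝ := (∫ y, Real.log (1 + ‖y‖) * |v y| ^ p)
      - Real.log (1 + 2 * R) * ∫ y, |v y| ^ p
  have hd : 0 ≤ (δ / 2) ^ p := by positivity
  have hinner : ∀ x ∈ A, ENNReal.ofReal ((δ / 2) ^ p * (K / 2)) ≤
      ∫⁻ y, ENNReal.ofReal (Real.log (1 + ‖x - y‖) * |u x| ^ p * |v y| ^ p) := by
    intro x hx
    have hxR : ‖x‖ ≤ R := (mem_ball_zero_iff.mp (hAR hx)).le
    have hux : (δ / 2) ^ p ≤ |u x| ^ p :=
      Real.rpow_le_rpow (by positivity) (huA x hx) (by linarith)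
    calc ENNReal.ofReal ((δ / 2) ^ p * (K / 2))
        = ENNReal.ofReal ((δ / 2) ^ p) * ENNReal.ofReal (K / 2) := ENNReal.ofReal_mul hd
      _ ≤ ENNReal.ofReal (|u x| ^ p) *
          ∫⁻ y, ENNReal.ofReal (Real.log (1 + ‖x - y‖) * |v y| ^ p) := by
        gcongr
        exact lintegral_log_one_add_norm_sub_mul_ge hv1 hv2 (fun y => by positivity) hxR
      _ ≤ ∫⁻ y, ENNReal.ofReal (|u x| ^ p) *
          ENNReal.ofReal (Real.log (1 + ‖x - y‖) * |v y| ^ p) := lintegral_const_mul_le _ _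
      _ = _ := by
        congr 1 with y
        rw [← ENNReal.ofReal_mul (by positivity)]
        ring_nf
  have hAfin : volume A ≠ ⊤ := (measure_mono hAR).trans_lt measure_ball_lt_top |>.ne
  calc ENNReal.ofReal (((volume A).toReal / 2) * (δ / 2) ^ p * K)
      = ENNReal.ofReal ((δ / 2) ^ p * (K / 2)) * volume A := by
        conv_rhs =>
          rw [← ENNReal.ofReal_toReal hAfin, ← ENNReal.ofReal_mul' ENNReal.toReal_nonneg]
        ring_nf
    _ = ∫⁻ x in A, ENNReal.ofReal ((δ / 2) ^ p * (K / 2)) := (setLIntegral_const _ _).symm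
    _ ≤ ∫⁻ x in A, ∫⁻ y, ENNReal.ofReal (Real.log (1 + ‖x - y‖) * |u x| ^ p * |v y| ^ p) :=
        setLIntegral_mono' hA hinner
    _ ≤ _ := setLIntegral_le_lintegral _ _

/-- Coercivity estimate: if `|u| ≥ δ/2` on a set `A ⊆ B_R(0)`, then
`∫∫ log(1+|x−y|)|u(x)|^p|v(y)|^p ≥ (|A|/2)(δ/2)^p(‖v‖_{L^p(μ)}^p − log(1+2R)‖v‖_{L^p}^p)`,
where `μ = log(1+|x|)dx`. -/
theorem stmt12 (p : ℝ) (hp : 2 ≤ p) (δ R : ℝ) (hδ : 0 < δ) (hR : 0 < R)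
    (u v : EuclideanSpace ℝ (Fin 2) → ℝ)
    (hu : Measurable u) (hvmeas : Measurable v)
    (A : Set (EuclideanSpace ℝ (Fin 2))) (hA : MeasurableSet A)
    (hAR : A ⊆ Metric.ball 0 R)
    (huA : ∀ x ∈ A, δ / 2 ≤ |u x|)
    (hv1 : Integrable (fun y => |v y| ^ p))
    (hv2 : Integrable (fun y => Real.log (1 + ‖y‖) * |v y| ^ p)) :
    ENNReal.ofReal
        (((volume A).toReal / 2) * (δ / 2) ^ p *
          ((∫ y, Real.log (1 + ‖y‖) * |v y| ^ p)
            - Real.log (1 + 2 * R) * ∫ y, |v y| ^ p)) ≤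
      ∫⁻ x, ∫⁻ y, ENNReal.ofReal (Real.log (1 + ‖x - y‖) * |u x| ^ p * |v y| ^ p) :=
  stmt12_general p hp δ R hδ u v A hA hAR huA hv1 hv2
end

section
/- Let p ≥ 2, q ≥ 2p, γ > 0, b ≥ 0, and u in the space X = H¹(ℝ²) ∩ L^p(log(1+|x|)dx), u ≠ 0. Define φ_u(t) = I(tu) where I(u) = (1/2)‖u‖²_{H¹} + (γ/(4pπ))V₀(u) − (b/q)‖u‖^q_{L^q} and V₀(u) = ∫∫ log|x−y| |u(x)|^p|u(y)|^p. Then φ_u'(t)/t = ‖u‖²_{H¹} + (γ/2π) t^{2p−2} V₀(u) − b t^{q−2}‖u‖^q_{L^q} for t > 0, and exactly one of the following holds: (1) there is a unique t_u > 0 with φ_u' > 0 on (0,t_u), φ_u' < 0 on (t_u,∞), and φ_u(t) → −∞ as t → ∞; or (2) φ_u' > 0 on (0,∞) and φ_u(t) → +∞ as t → ∞. Moreover, if V₀(u) < 0 then case (1) holds and 0 < sup_{t∈ℝ} I(tu) < +∞. -/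
/-!
For `t > 0` the fiber map has derivative `t ψ(t)` with `ψ(t) = A + B t^m - D t^n` (`profile`), and
`ψ(t) / t^m = A t^(-m) + (B - D t^(n-m))` is strictly decreasing since `m > 0`, `D ≥ 0` and
`n ≥ m`; so `ψ` changes sign at most once, from `+` to `-`. If the coefficient
`B - D t^(n-m)` never becomes negative, then `ψ ≥ A` and the fiber map grows without bound.
Otherwise, once it is some `c < 0` it stays `≤ c`, so `ψ(t) ≤ A + c t^m → -∞`: since
`ψ(0) = A > 0`, `ψ` has a unique zero `t₀`, the fiber map increases on `[0, t₀]`, decreases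
afterwards and tends to `-∞`. For `V < 0` the coefficient is negative from the start, and the
even fiber map attains its maximum, which is positive, at `±t₀`.
-/

open Filter Set Real

section Profile

variable {a B D m n s t : ℝ}

noncomputable def profile (a B D m n t : ℝ) : ℝ := a + B * t ^ m - D * t ^ n

lemma profile_eq (ht : 0 < t) : profile a B D m n t = a + t ^ m * (B - D * t ^ (n - m)) := by
  have := (rpow_pos_of_pos ht m).ne'
  rw [profile, rpow_sub ht]
  field_simp
  ring

lemma continuous_profile (hm : 0 ≤ m) (hn : 0 ≤ n) : Continuous (profile a B D m n) :=
  (continuous_const.add (continuous_const.mul (continuous_rpow_const hm))).sub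
    (continuous_const.mul (continuous_rpow_const hn))

lemma profile_zero (hm : m ≠ 0) (hn : n ≠ 0) : profile a B D m n 0 = a := by
  simp [profile, zero_rpow hm, zero_rpow hn]

lemma antitoneOn_sub_mul_rpow (hD : 0 ≤ D) (hmn : m ≤ n) :
    AntitoneOn (fun t ↦ B - D * t ^ (n - m)) (Ioi 0) := fun s hs t _ hst ↦ by
  have : s ^ (n - m) ≤ t ^ (n - m) := rpow_le_rpow (le_of_lt hs) hst (sub_nonneg.2 hmn)
  dsimp only
  gcongr

lemma strictAntiOn_profile_div_rpow (ha : 0 < a) (hm : 0 < m) (hD : 0 ≤ D) (hmn : m ≤ n) :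
    StrictAntiOn (fun t ↦ profile a B D m n t / t ^ m) (Ioi 0) := by
  have hdecr : StrictAntiOn (fun t : ℝ ↦ a / t ^ m) (Ioi 0) := fun s hs t _ hst ↦
    div_lt_div_of_pos_left ha (rpow_pos_of_pos hs m) (rpow_lt_rpow (le_of_lt hs) hst hm)
  refine (hdecr.add_antitone (antitoneOn_sub_mul_rpow (B := B) hD hmn)).congr fun t ht ↦ ?_
  have := (rpow_pos_of_pos ht m).ne'
  rw [profile_eq ht]
  field_simp

lemma profile_neg_of_nonpos (ha : 0 < a) (hm : 0 < m) (hD : 0 ≤ D) (hmn : m ≤ n)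
    (hs : 0 < s) (hst : s < t) (h : profile a B D m n s ≤ 0) : profile a B D m n t < 0 := by
  have ht := hs.trans hst
  have hlt := strictAntiOn_profile_div_rpow (B := B) ha hm hD hmn hs ht hst
  have : profile a B D m n t / t ^ m < 0 :=
    hlt.trans_le (div_nonpos_of_nonpos_of_nonneg h (rpow_nonneg hs.le m))
  exact neg_of_div_neg_left this (rpow_nonneg ht.le m)

lemma tendsto_profile_atBot (hm : 0 < m) (hD : 0 ≤ D) (hmn : m ≤ n) (hs : 0 < s)
    (hc : B - D * s ^ (n - m) < 0) : Tendsto (profile a B D m n) atTop atBot := by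
  refine tendsto_atBot_mono' _ ?_ (tendsto_atBot_add_const_left _ a
    ((tendsto_rpow_atTop hm).const_mul_atTop_of_neg hc))
  filter_upwards [eventually_ge_atTop s] with t hst
  have ht := hs.trans_le hst
  have := mul_le_mul_of_nonneg_left (antitoneOn_sub_mul_rpow (B := B) hD hmn hs ht hst)
    (rpow_nonneg ht.le m)
  rw [profile_eq ht]
  linarith

lemma exists_profile_sign_change (ha : 0 < a) (hm : 0 < m) (hD : 0 ≤ D) (hmn : m ≤ n)
    (hs : 0 < s) (hc : B - D * s ^ (n - m) < 0) :
    ∃ t₀ > 0, (∀ t, 0 < t → t < t₀ → 0 < profile a B D m n t) ∧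
      ∀ t, t₀ < t → profile a B D m n t < 0 := by
  have hn := hm.trans_le hmn
  obtain ⟨u, hu, hu0⟩ := (((tendsto_profile_atBot (a := a) hm hD hmn hs hc).eventually
    (eventually_le_atBot 0)).and (eventually_gt_atTop 0)).exists
  obtain ⟨t₀, ⟨ht₀0, -⟩, hzero⟩ : ∃ t₀ ∈ Icc 0 u, profile a B D m n t₀ = 0 :=
    intermediate_value_Icc' hu0.le (continuous_profile hm.le hn.le).continuousOn
      ⟨hu, (profile_zero hm.ne' hn.ne').symm ▸ ha.le⟩
  have ht₀ : 0 < t₀ := ht₀0.lt_of_ne <| by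
    rintro rfl
    rw [profile_zero hm.ne' hn.ne'] at hzero
    exact ha.ne' hzero
  refine ⟨t₀, ht₀, fun t ht htt₀ ↦ ?_, fun t ht ↦ profile_neg_of_nonpos ha hm hD hmn ht₀ ht hzero.le⟩
  by_contra! h
  exact (profile_neg_of_nonpos ha hm hD hmn ht htt₀ h).ne hzero

end Profile

section DerivativeGrowth

variable {f f' : ℝ → ℝ} {c : ℝ}

lemma tendsto_atTop_of_hasDerivAt_ge (hc : 0 < c) (hf : ∀ᶠ t in atTop, HasDerivAt f (f' t) t)
    (hf' : ∀ᶠ t in atTop, c ≤ f' t) : Tendsto f atTop atTop := by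
  obtain ⟨T, hT⟩ := eventually_atTop.1 (hf.and hf')
  have hgrowth := (convex_Ici T).mul_sub_le_image_sub_of_le_deriv
    (fun t ht ↦ (hT t ht).1.continuousAt.continuousWithinAt)
    (fun t ht ↦ (hT t (interior_subset ht)).1.differentiableAt.differentiableWithinAt)
    (fun t ht ↦ (hT t (interior_subset ht)).1.deriv ▸ (hT t (interior_subset ht)).2)
  refine tendsto_atTop_mono' _ ?_ (tendsto_atTop_add_const_left _ (f T)
    ((tendsto_atTop_add_const_right _ (-T) tendsto_id).const_mul_atTop hc))
  filter_upwards [eventually_ge_atTop T] with t ht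
  have := hgrowth T self_mem_Ici t ht ht
  simp only [id, ← sub_eq_add_neg]
  linarith

lemma tendsto_atBot_of_hasDerivAt_le (hc : 0 < c) (hf : ∀ᶠ t in atTop, HasDerivAt f (f' t) t)
    (hf' : ∀ᶠ t in atTop, f' t ≤ -c) : Tendsto f atTop atBot :=
  tendsto_neg_atTop_iff.1 <| tendsto_atTop_of_hasDerivAt_ge hc (hf.mono fun _ ↦ HasDerivAt.neg)
    (hf'.mono fun _ h ↦ le_neg_of_le_neg h)

end DerivativeGrowth

def RisesThenFalls (f : ℝ → ℝ) : Prop :=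
  ∃ t₀ > (0 : ℝ), (∀ t : ℝ, 0 < t → t < t₀ → 0 < deriv f t) ∧
    (∀ t : ℝ, t₀ < t → deriv f t < 0) ∧ Tendsto f atTop atBot

def RisesUnboundedly (f : ℝ → ℝ) : Prop :=
  (∀ t : ℝ, 0 < t → 0 < deriv f t) ∧ Tendsto f atTop atTop

namespace RisesThenFalls

variable {f : ℝ → ℝ}

lemma not_risesUnboundedly (h : RisesThenFalls f) : ¬RisesUnboundedly f := by
  rintro ⟨hpos, -⟩
  obtain ⟨t₀, ht₀, -, hneg, -⟩ := h
  exact (hneg (t₀ + 1) (by linarith)).not_gt (hpos _ (by linarith))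

lemma exists_isGreatest_range (h : RisesThenFalls f) (hf : Continuous f)
    (heven : ∀ t, f (-t) = f t) : ∃ M, f 0 < M ∧ IsGreatest (range f) M := by
  obtain ⟨t₀, ht₀, hup, hdown, -⟩ := h
  have hmono : StrictMonoOn f (Icc 0 t₀) := strictMonoOn_of_deriv_pos (convex_Icc 0 t₀)
    hf.continuousOn fun t ht ↦ by rw [interior_Icc] at ht; exact hup t ht.1 ht.2
  have hanti : AntitoneOn f (Ici t₀) := by
    refine antitoneOn_of_deriv_nonpos (convex_Ici t₀) hf.continuousOn ?_ ?_ <;>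
      rw [interior_Ici]
    · exact fun t ht ↦ (differentiableAt_of_deriv_ne_zero (hdown t ht).ne).differentiableWithinAt
    · exact fun t ht ↦ (hdown t ht).le
  refine ⟨f t₀, hmono ⟨le_rfl, ht₀.le⟩ ⟨ht₀.le, le_rfl⟩ ht₀, mem_range_self t₀, ?_⟩
  rintro _ ⟨t, rfl⟩
  have habs : f t = f |t| := by
    rcases abs_choice t with h | h <;> rw [h]
    rw [heven]
  rw [habs]
  rcases le_total |t| t₀ with ht | ht
  · exact hmono.monotoneOn ⟨abs_nonneg t, ht⟩ ⟨ht₀.le, le_rfl⟩ ht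
  · exact hanti self_mem_Ici ht ht

end RisesThenFalls

section FiberMap

variable {A B D m n s t : ℝ}

noncomputable def fiberMap (A B D m n t : ℝ) : ℝ :=
  1 / 2 * t ^ 2 * A + B / (m + 2) * |t| ^ (m + 2) - D / (n + 2) * |t| ^ (n + 2)

lemma hasDerivAt_fiberMap (hm : 0 ≤ m) (hn : 0 ≤ n) (ht : 0 < t) :
    HasDerivAt (fiberMap A B D m n) (t * profile A B D m n t) t := by
  have hev : fiberMap A B D m n =ᶠ[nhds t] fun s ↦
      1 / 2 * s ^ 2 * A + B / (m + 2) * s ^ (m + 2) - D / (n + 2) * s ^ (n + 2) := by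
    filter_upwards [eventually_gt_nhds ht] with s hs
    simp only [fiberMap, abs_of_pos hs]
  have hsum := ((((hasDerivAt_pow 2 t).const_mul (1 / 2)).mul_const A).add
    ((hasDerivAt_rpow_const (p := m + 2) (Or.inl ht.ne')).const_mul (B / (m + 2)))).sub
      ((hasDerivAt_rpow_const (p := n + 2) (Or.inl ht.ne')).const_mul (D / (n + 2)))
  refine (hsum.congr_deriv ?_).congr_of_eventuallyEq hev
  have hm2 : m + 2 ≠ 0 := by positivity
  have hn2 : n + 2 ≠ 0 := by positivity
  rw [profile, show m + 2 - 1 = 1 + m by ring, show n + 2 - 1 = 1 + n by ring,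
    rpow_add ht, rpow_add ht, rpow_one]
  field_simp
  ring

lemma continuous_fiberMap (hm : 0 ≤ m) (hn : 0 ≤ n) : Continuous (fiberMap A B D m n) := by
  unfold fiberMap
  fun_prop (disch := linarith)

lemma fiberMap_neg : fiberMap A B D m n (-t) = fiberMap A B D m n t := by
  simp [fiberMap]

lemma fiberMap_zero (hm : 0 ≤ m) (hn : 0 ≤ n) : fiberMap A B D m n 0 = 0 := by
  simp [fiberMap, zero_rpow (by positivity : m + 2 ≠ 0), zero_rpow (by positivity : n + 2 ≠ 0)]

theorem risesThenFalls_fiberMap (hA : 0 < A) (hm : 0 < m) (hD : 0 ≤ D) (hmn : m ≤ n)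
    (hs : 0 < s) (hc : B - D * s ^ (n - m) < 0) : RisesThenFalls (fiberMap A B D m n) := by
  have hderiv : ∀ t, 0 < t → HasDerivAt (fiberMap A B D m n) (t * profile A B D m n t) t :=
    fun t ↦ hasDerivAt_fiberMap hm.le (hm.le.trans hmn)
  obtain ⟨t₀, ht₀, hup, hdown⟩ := exists_profile_sign_change hA hm hD hmn hs hc
  refine ⟨t₀, ht₀, fun t ht htt₀ ↦ ?_, fun t ht ↦ ?_, ?_⟩
  · rw [(hderiv t ht).deriv]
    exact mul_pos ht (hup t ht htt₀)
  · rw [(hderiv t (ht₀.trans ht)).deriv]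
    exact mul_neg_of_pos_of_neg (ht₀.trans ht) (hdown t ht)
  · refine tendsto_atBot_of_hasDerivAt_le one_pos
      ((eventually_gt_atTop 0).mono hderiv) ?_
    filter_upwards [eventually_ge_atTop 1,
      (tendsto_profile_atBot hm hD hmn hs hc).eventually (eventually_le_atBot (-1))] with t ht h
    nlinarith

theorem risesUnboundedly_fiberMap (hA : 0 < A) (hm : 0 ≤ m) (hn : 0 ≤ n)
    (hc : ∀ t, 0 < t → 0 ≤ B - D * t ^ (n - m)) : RisesUnboundedly (fiberMap A B D m n) := by
  have hderiv : ∀ t, 0 < t → HasDerivAt (fiberMap A B D m n) (t * profile A B D m n t) t :=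
    fun t ↦ hasDerivAt_fiberMap hm hn
  have hge : ∀ t, 0 < t → A ≤ profile A B D m n t := fun t ht ↦ by
    rw [profile_eq ht]
    nlinarith [mul_nonneg (rpow_nonneg ht.le m) (hc t ht)]
  refine ⟨fun t ht ↦ ?_, tendsto_atTop_of_hasDerivAt_ge hA ((eventually_gt_atTop 0).mono hderiv) ?_⟩
  · rw [(hderiv t ht).deriv]
    exact mul_pos ht (hA.trans_le (hge t ht))
  · filter_upwards [eventually_ge_atTop 1] with t ht
    nlinarith [hge t (by linarith)]

theorem fiberMap_dichotomy (hA : 0 < A) (hm : 0 < m) (hD : 0 ≤ D) (hmn : m ≤ n) :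
    Xor (RisesThenFalls (fiberMap A B D m n)) (RisesUnboundedly (fiberMap A B D m n)) := by
  by_cases hc : ∀ t, 0 < t → 0 ≤ B - D * t ^ (n - m)
  · have h := risesUnboundedly_fiberMap hA hm.le (hm.le.trans hmn) hc
    exact Or.inr ⟨h, fun h' ↦ h'.not_risesUnboundedly h⟩
  · push Not at hc
    obtain ⟨s, hs, hc⟩ := hc
    have h := risesThenFalls_fiberMap hA hm hD hmn hs hc
    exact Or.inl ⟨h, h.not_risesUnboundedly⟩

end FiberMap

/-- Dichotomy for the fiber map `φ_u(t) = I(tu)` when `p ≥ 2`, `q ≥ 2p`: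
writing `A = ‖u‖²_{H¹} > 0`, `V = V₀(u)`, `Q = ‖u‖_{L^q}^q > 0` and
`φ(t) = (1/2)t²A + (γ/(4pπ))|t|^{2p}V − (b/q)|t|^q Q`, one has
`φ'(t) = t(A + (γ/2π)t^{2p−2}V − b t^{q−2}Q)` for `t > 0`, exactly one of the
two growth alternatives holds, and if `V < 0` then the first alternative holds
with `0 < sup_{t∈ℝ} φ(t) < +∞`. -/
theorem stmt17 (p q γ b : ℝ) (hp : 2 ≤ p) (hq : 2 * p ≤ q) (hγ : 0 < γ)
    (hb : 0 ≤ b) (A V Q : ℝ) (hA : 0 < A) (hQ : 0 < Q)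
    (φ : ℝ → ℝ)
    (hφ : φ = fun t : ℝ =>
      (1 / 2) * t ^ 2 * A + (γ / (4 * p * Real.pi)) * |t| ^ (2 * p) * V
        - (b / q) * |t| ^ q * Q) :
    (∀ t : ℝ, 0 < t →
        deriv φ t = t * (A + (γ / (2 * Real.pi)) * t ^ (2 * p - 2) * V
          - b * t ^ (q - 2) * Q)) ∧
    Xor'
      (∃ t0 > (0 : ℝ), (∀ t : ℝ, 0 < t → t < t0 → 0 < deriv φ t) ∧
        (∀ t : ℝ, t0 < t → deriv φ t < 0) ∧ Tendsto φ atTop atBot)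
      ((∀ t : ℝ, 0 < t → 0 < deriv φ t) ∧ Tendsto φ atTop atTop) ∧
    (V < 0 →
      (∃ t0 > (0 : ℝ), (∀ t : ℝ, 0 < t → t < t0 → 0 < deriv φ t) ∧
        (∀ t : ℝ, t0 < t → deriv φ t < 0) ∧ Tendsto φ atTop atBot) ∧
      BddAbove (Set.range φ) ∧ 0 < sSup (Set.range φ)) := by
  have hm : 0 < 2 * p - 2 := by linarith
  have hmn : 2 * p - 2 ≤ q - 2 := by linarith
  have hn : 0 ≤ q - 2 := by linarith
  have hD : 0 ≤ b * Q := mul_nonneg hb hQ.le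
  have hφ' : φ = fiberMap A (γ / (2 * π) * V) (b * Q) (2 * p - 2) (q - 2) := by
    have : p ≠ 0 := by positivity
    rw [hφ]
    ext t
    rw [fiberMap, show 2 * p - 2 + 2 = 2 * p by ring, show q - 2 + 2 = q by ring]
    field_simp
    ring
  subst hφ'
  refine ⟨fun t ht ↦ by rw [(hasDerivAt_fiberMap hm.le hn ht).deriv, profile]; ring,
    fiberMap_dichotomy hA hm hD hmn, fun hV ↦ ?_⟩
  have hc : γ / (2 * π) * V - b * Q * 1 ^ (q - 2 - (2 * p - 2)) < 0 := by
    have : γ / (2 * π) * V < 0 := mul_neg_of_pos_of_neg (by positivity) hV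
    rw [one_rpow]
    linarith
  have h := risesThenFalls_fiberMap hA hm hD hmn one_pos hc
  obtain ⟨M, hM0, hM⟩ := h.exists_isGreatest_range (continuous_fiberMap hm.le hn)
    fun _ ↦ fiberMap_neg
  rw [fiberMap_zero hm.le hn] at hM0
  exact ⟨h, hM.bddAbove, hM.csSup_eq ▸ hM0⟩
end

section
/- Let u ∈ C⁰(ℝ²) ∩ L^p(ℝ²) with p ≥ 1, ∫ log(1+|y|)|u(y)|^p dy < ∞ and |u|^{2p} ∈ L¹(ℝ²) (e.g. u ∈ H¹), and set w(x) = (1/2π)∫_{ℝ²} log|x−y| |u(y)|^p dy. Then w(x) − (1/2π) log|x| ∫_{ℝ²} |u|^p dy → 0 as |x| → +∞. -/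
/-!
With `D x y = log ‖x - y‖ - log ‖x‖` and `f = |u|^p` it suffices that `∫ D x y f y dy → 0`.
Split the integral at `‖y‖ = ‖x‖ / 2`. Where `‖y‖ ≤ ‖x‖ / 2` the point `y` stays away from the
singularity, `|D x y| ≤ log (1 + ‖y‖) + log 2` and `D x y → 0` for fixed `y`, so dominated
convergence applies. Where `‖y‖ > ‖x‖ / 2` the only new contribution is the singular part
`log⁺ ‖x - y‖⁻¹` of `-log ‖x - y‖`; this kernel is square integrable (it is `O(‖z‖^(-1/4))`),
so by Cauchy–Schwarz its contribution is bounded by the `L²` tail of `f` beyond `‖x‖ / 2`,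
and the remaining terms are tails of integrable functions.
-/

open MeasureTheory Filter Set Bornology Topology
open scoped Real

section PointwiseBounds

variable {E : Type*} [SeminormedAddCommGroup E] {x y : E}

lemma log_norm_sub_sub_log_norm_le (hx : 1 ≤ ‖x‖) :
    Real.log ‖x - y‖ - Real.log ‖x‖ ≤ Real.log (1 + ‖y‖) := by
  have hlogx : 0 ≤ Real.log ‖x‖ := Real.log_nonneg hx
  have hlogy : 0 ≤ Real.log (1 + ‖y‖) := Real.log_nonneg (by simp)
  rcases (norm_nonneg (x - y)).eq_or_lt with h | h
  · rw [← h, Real.log_zero]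
    linarith
  · rw [sub_le_iff_le_add', ← Real.log_mul (by positivity) (by positivity)]
    exact Real.log_le_log h (by nlinarith [norm_sub_le x y, norm_nonneg y])

lemma abs_log_norm_sub_sub_log_norm_le_two_mul_div (hx : 0 < ‖x‖) (h : ‖x‖ / 2 ≤ ‖x - y‖) :
    |Real.log ‖x - y‖ - Real.log ‖x‖| ≤ 2 * ‖y‖ / ‖x‖ := by
  have hxy : 0 < ‖x - y‖ := by linarith
  have hupper := Real.log_le_sub_one_of_pos (div_pos hxy hx)
  have hlower := Real.log_le_sub_one_of_pos (div_pos hx hxy)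
  rw [Real.log_div hxy.ne' hx.ne'] at hupper
  rw [Real.log_div hx.ne' hxy.ne'] at hlower
  have h₁ : ‖x - y‖ / ‖x‖ - 1 ≤ 2 * ‖y‖ / ‖x‖ := by
    rw [div_sub_one hx.ne']
    gcongr
    linarith [norm_sub_le x y, norm_nonneg y]
  have h₂ : ‖x‖ / ‖x - y‖ - 1 ≤ 2 * ‖y‖ / ‖x‖ := by
    have htri : ‖x‖ ≤ ‖x - y‖ + ‖y‖ := by simpa using norm_add_le (x - y) y
    rw [div_sub_one hxy.ne', div_le_div_iff₀ hxy hx]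
    nlinarith [mul_le_mul_of_nonneg_left h (norm_nonneg y)]
  exact abs_le.2 ⟨by linarith, by linarith⟩

lemma abs_log_norm_sub_sub_log_norm_le_of_half_le (hx : 1 ≤ ‖x‖) (h : ‖x‖ / 2 ≤ ‖x - y‖) :
    |Real.log ‖x - y‖ - Real.log ‖x‖| ≤ Real.log (1 + ‖y‖) + Real.log 2 := by
  have hlower := Real.log_le_log (by positivity) h
  rw [Real.log_div (by positivity) two_ne_zero] at hlower
  have hlogy : 0 ≤ Real.log (1 + ‖y‖) := Real.log_nonneg (by simp)
  have hlog2 : 0 ≤ Real.log 2 := Real.log_nonneg one_le_two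
  exact abs_le.2 ⟨by linarith, by linarith [log_norm_sub_sub_log_norm_le (y := y) hx]⟩

lemma abs_log_norm_sub_sub_log_norm_le (hx : 1 ≤ ‖x‖) :
    |Real.log ‖x - y‖ - Real.log ‖x‖| ≤ log⁺ ‖x - y‖⁻¹ + Real.log (1 + ‖y‖) + Real.log 2 := by
  rcases le_or_gt (‖x‖ / 2) ‖x - y‖ with h | h
  · linarith [abs_log_norm_sub_sub_log_norm_le_of_half_le hx h,
      Real.posLog_nonneg (x := ‖x - y‖⁻¹)]
  · have htri : ‖x‖ ≤ ‖x - y‖ + ‖y‖ := by simpa using norm_add_le (x - y) y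
    have hx2 : ‖x‖ ≤ 2 * (1 + ‖y‖) := by linarith
    have hlogx : Real.log ‖x‖ ≤ Real.log 2 + Real.log (1 + ‖y‖) := by
      rw [← Real.log_mul two_ne_zero (by positivity)]
      exact Real.log_le_log (by linarith) hx2
    have hneg : -Real.log ‖x - y‖ ≤ log⁺ ‖x - y‖⁻¹ := by
      rw [← Real.log_inv]
      exact le_max_right _ _
    have hlog2 : 0 ≤ Real.log 2 := Real.log_nonneg one_le_two
    have hupper := log_norm_sub_sub_log_norm_le (y := y) hx
    have hpos : 0 ≤ log⁺ ‖x - y‖⁻¹ := Real.posLog_nonneg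
    exact abs_le.2 ⟨by linarith, by linarith⟩

lemma norm_log_norm_sub_sub_log_norm_mul_le (hx : 1 ≤ ‖x‖) (c : ℝ) :
    ‖(Real.log ‖x - y‖ - Real.log ‖x‖) * c‖
      ≤ log⁺ ‖x - y‖⁻¹ * |c| + (Real.log (1 + ‖y‖) + Real.log 2) * |c| := by
  rw [norm_mul, Real.norm_eq_abs, Real.norm_eq_abs]
  calc |Real.log ‖x - y‖ - Real.log ‖x‖| * |c|
      ≤ (log⁺ ‖x - y‖⁻¹ + Real.log (1 + ‖y‖) + Real.log 2) * |c| :=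
        mul_le_mul_of_nonneg_right (abs_log_norm_sub_sub_log_norm_le hx) (abs_nonneg _)
    _ = _ := by ring

end PointwiseBounds

lemma Real.posLog_le_rpow_div {s ε : ℝ} (hs : 0 ≤ s) (hε : 0 < ε) : log⁺ s ≤ s ^ ε / ε :=
  max_le (by positivity) (Real.log_le_rpow_div hs hε)

lemma Real.sq_posLog_inv_le {r : ℝ} (hr : 0 ≤ r) : (log⁺ r⁻¹) ^ 2 ≤ 16 * r ^ (-(1 / 2 : ℝ)) := by
  have h := Real.posLog_le_rpow_div (inv_nonneg.2 hr) (by norm_num : (0 : ℝ) < 1 / 4)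
  calc (log⁺ r⁻¹) ^ 2 ≤ (r⁻¹ ^ (1 / 4 : ℝ) / (1 / 4)) ^ 2 := by gcongr; exact Real.posLog_nonneg
    _ = 16 * r ^ (-(1 / 2 : ℝ)) := by
      rw [div_pow, ← Real.rpow_natCast, ← Real.rpow_mul (by positivity), Real.inv_rpow hr,
        Real.rpow_neg hr]
      norm_num
      ring

lemma measurable_posLog_inv_norm_sub {E : Type*} [SeminormedAddCommGroup E] [MeasurableSpace E]
    [OpensMeasurableSpace E] (x : E) : Measurable fun y : E => log⁺ ‖x - y‖⁻¹ :=
  Real.continuous_posLog.measurable.comp (continuous_const.sub continuous_id).norm.measurable.inv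

section Kernel

variable {E : Type*} [NormedAddCommGroup E] [NormedSpace ℝ E] [FiniteDimensional ℝ E]
  [Nontrivial E] [MeasurableSpace E] [BorelSpace E] {μ : Measure E} [μ.IsAddHaarMeasure]

lemma integrable_sq_posLog_inv_norm : Integrable (fun z : E => (log⁺ ‖z‖⁻¹) ^ 2) μ := by
  have hmeas : AEStronglyMeasurable (fun z : E => (log⁺ ‖z‖⁻¹) ^ 2) μ := by
    simpa using ((measurable_posLog_inv_norm_sub (0 : E)).pow_const 2).aestronglyMeasurable
  have hloc : LocallyIntegrable (fun z : E => (log⁺ ‖z‖⁻¹) ^ 2) μ := by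
    refine locallyIntegrable_of_norm_le_rpow Module.finrank_pos (C := 16) (α := 1 / 2) ?_
      (ae_of_all _ fun z => ?_) hmeas
    · have : (1 : ℝ) ≤ Module.finrank ℝ E := by exact_mod_cast Module.finrank_pos
      linarith
    · rw [Real.norm_of_nonneg (sq_nonneg _)]
      exact Real.sq_posLog_inv_le (norm_nonneg z)
  refine (hloc.integrableOn_isCompact (isCompact_closedBall 0 1))
    |>.integrable_of_forall_notMem_eq_zero fun z hz => ?_
  rw [Metric.mem_closedBall, dist_zero_right, not_le] at hz
  have hinv : |‖z‖⁻¹| ≤ 1 := by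
    rw [abs_inv, abs_norm]
    exact inv_le_one_of_one_le₀ hz.le
  rw [(Real.posLog_eq_zero_iff _).2 hinv, zero_pow two_ne_zero]

lemma memLp_posLog_inv_norm_sub (x : E) : MemLp (fun y : E => log⁺ ‖x - y‖⁻¹) 2 μ :=
  (memLp_two_iff_integrable_sq (measurable_posLog_inv_norm_sub x).aestronglyMeasurable).2
    (integrable_sq_posLog_inv_norm.comp_sub_left x)

end Kernel

lemma tendsto_setIntegral_lt_norm_atTop {E G : Type*} [SeminormedAddCommGroup E] [MeasurableSpace E]
    [OpensMeasurableSpace E] [NormedAddCommGroup G] [NormedSpace ℝ G] {μ : Measure E} {g : E → G}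
    (hg : Integrable g μ) :
    Tendsto (fun R : ℝ => ∫ y in {y | R < ‖y‖}, g y ∂μ) atTop (𝓝 0) := by
  have hset (R : ℝ) : MeasurableSet {y : E | R < ‖y‖} :=
    measurableSet_lt measurable_const continuous_norm.measurable
  simp_rw [← integral_indicator (hset _)]
  rw [← integral_zero E G]
  refine tendsto_integral_filter_of_dominated_convergence (fun y => ‖g y‖)
    (Eventually.of_forall fun R => hg.aestronglyMeasurable.indicator (hset R))
    (Eventually.of_forall fun R => ae_of_all _ fun y => norm_indicator_le_norm_self _ _) hg.norm
    (ae_of_all _ fun y => tendsto_const_nhds.congr' ?_)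
  filter_upwards [eventually_ge_atTop ‖y‖] with R hR
  exact (indicator_of_notMem (s := {y : E | R < ‖y‖}) (not_lt.2 hR) g).symm

lemma integral_mul_le_sqrt_mul_sqrt {α : Type*} [MeasurableSpace α] {μ : Measure α} {g h : α → ℝ}
    (hg0 : 0 ≤ᵐ[μ] g) (hh0 : 0 ≤ᵐ[μ] h) (hg : MemLp g 2 μ) (hh : MemLp h 2 μ) :
    ∫ a, g a * h a ∂μ ≤ √(∫ a, g a ^ 2 ∂μ) * √(∫ a, h a ^ 2 ∂μ) := by
  have two : ENNReal.ofReal 2 = 2 := ENNReal.ofReal_ofNat 2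
  have := integral_mul_le_Lp_mul_Lq_of_nonneg Real.HolderConjugate.two_two hg0 hh0
    (two ▸ hg) (two ▸ hh)
  simp only [Real.rpow_two] at this
  rwa [Real.sqrt_eq_rpow, Real.sqrt_eq_rpow]

section Potential

variable {E : Type*} [NormedAddCommGroup E] [MeasurableSpace E] {μ : Measure E} {f : E → ℝ}

lemma integrable_log_one_add_norm_add_const_mul_abs (hf : Integrable f μ)
    (hlog : Integrable (fun y => Real.log (1 + ‖y‖) * f y) μ) (c : ℝ) :
    Integrable (fun y => (Real.log (1 + ‖y‖) + c) * |f y|) μ := by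
  refine (hlog.norm.add (hf.norm.const_mul c)).congr (ae_of_all _ fun y => ?_)
  have hlog0 : 0 ≤ Real.log (1 + ‖y‖) := Real.log_nonneg (by simp)
  simp only [Pi.add_apply, norm_mul, Real.norm_eq_abs, abs_of_nonneg hlog0]
  ring

section Measurable

variable [OpensMeasurableSpace E]

lemma aestronglyMeasurable_log_norm_sub_sub_log_norm_mul (hf : AEStronglyMeasurable f μ) (x : E) :
    AEStronglyMeasurable (fun y => (Real.log ‖x - y‖ - Real.log ‖x‖) * f y) μ :=
  ((Real.measurable_log.comp (continuous_const.sub continuous_id).norm.measurable).sub_const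
    _).aestronglyMeasurable.mul hf

lemma tendsto_setIntegral_norm_le_half_log_norm_sub_sub_log_norm_mul (hf : Integrable f μ)
    (hlog : Integrable (fun y => Real.log (1 + ‖y‖) * f y) μ) :
    Tendsto (fun x => ∫ y in {y | ‖x‖ / 2 < ‖y‖}ᶜ, (Real.log ‖x - y‖ - Real.log ‖x‖) * f y ∂μ)
      (cobounded E) (𝓝 0) := by
  have : (cobounded E).IsCountablyGenerated := by rw [← comap_norm_atTop]; infer_instance
  have hset (x : E) : MeasurableSet {y : E | ‖x‖ / 2 < ‖y‖}ᶜ :=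
    (measurableSet_lt measurable_const continuous_norm.measurable).compl
  have hfar {x y : E} (hy : y ∈ {y : E | ‖x‖ / 2 < ‖y‖}ᶜ) : ‖x‖ / 2 ≤ ‖x - y‖ := by
    simp only [mem_compl_iff, mem_ofPred_eq, not_lt] at hy
    linarith [norm_sub_norm_le x y]
  simp_rw [← integral_indicator (hset _)]
  rw [← integral_zero E ℝ]
  refine tendsto_integral_filter_of_dominated_convergence
    (fun y => (Real.log (1 + ‖y‖) + Real.log 2) * |f y|)
    (Eventually.of_forall fun x =>
      (aestronglyMeasurable_log_norm_sub_sub_log_norm_mul hf.aestronglyMeasurable x).indicator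
        (hset x)) ?_ (integrable_log_one_add_norm_add_const_mul_abs hf hlog _)
    (ae_of_all _ fun y => ?_)
  · filter_upwards [tendsto_norm_cobounded_atTop.eventually_ge_atTop 1] with x hx
    refine ae_of_all _ fun y => ?_
    rw [norm_indicator_eq_indicator_norm]
    refine indicator_apply_le' (fun hy => ?_) (fun _ => ?_)
    · rw [norm_mul, Real.norm_eq_abs, Real.norm_eq_abs]
      exact mul_le_mul_of_nonneg_right
        (abs_log_norm_sub_sub_log_norm_le_of_half_le hx (hfar hy)) (abs_nonneg _)
    · have hlog0 : 0 ≤ Real.log (1 + ‖y‖) := Real.log_nonneg (by simp)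
      have hlog2 : 0 ≤ Real.log 2 := Real.log_nonneg one_le_two
      positivity
  · have hdecay : Tendsto (fun x : E => 2 * ‖y‖ * |f y| * ‖x‖⁻¹) (cobounded E) (𝓝 0) := by
      simpa using (tendsto_inv_atTop_zero.comp tendsto_norm_cobounded_atTop).const_mul
        (2 * ‖y‖ * |f y|)
    refine squeeze_zero_norm' ?_ hdecay
    filter_upwards [tendsto_norm_cobounded_atTop.eventually_gt_atTop 0] with x hx
    rw [norm_indicator_eq_indicator_norm]
    refine indicator_apply_le' (fun hy => ?_) (fun _ => by positivity)
    rw [norm_mul, Real.norm_eq_abs, Real.norm_eq_abs]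
    calc |Real.log ‖x - y‖ - Real.log ‖x‖| * |f y| ≤ 2 * ‖y‖ / ‖x‖ * |f y| :=
          mul_le_mul_of_nonneg_right
            (abs_log_norm_sub_sub_log_norm_le_two_mul_div hx (hfar hy)) (abs_nonneg _)
      _ = 2 * ‖y‖ * |f y| * ‖x‖⁻¹ := by ring

end Measurable

variable [NormedSpace ℝ E] [FiniteDimensional ℝ E] [BorelSpace E] [Nontrivial E]
  [μ.IsAddHaarMeasure]

lemma setIntegral_posLog_inv_norm_sub_mul_abs_le (hf2 : MemLp f 2 μ) (x : E) (s : Set E) :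
    ∫ y in s, log⁺ ‖x - y‖⁻¹ * |f y| ∂μ
      ≤ √(∫ z, (log⁺ ‖z‖⁻¹) ^ 2 ∂μ) * √(∫ y in s, f y ^ 2 ∂μ) := by
  have hk := memLp_posLog_inv_norm_sub (μ := μ) x
  calc ∫ y in s, log⁺ ‖x - y‖⁻¹ * |f y| ∂μ
      ≤ √(∫ y in s, (log⁺ ‖x - y‖⁻¹) ^ 2 ∂μ) * √(∫ y in s, |f y| ^ 2 ∂μ) :=
        integral_mul_le_sqrt_mul_sqrt (ae_of_all _ fun _ => Real.posLog_nonneg)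
          (ae_of_all _ fun _ => abs_nonneg _) (hk.restrict s) (hf2.abs.restrict s)
    _ ≤ √(∫ z, (log⁺ ‖z‖⁻¹) ^ 2 ∂μ) * √(∫ y in s, f y ^ 2 ∂μ) := by
        simp_rw [sq_abs]
        gcongr
        rw [← integral_sub_left_eq_self _ μ x]
        exact setIntegral_le_integral (integrable_sq_posLog_inv_norm.comp_sub_left x)
          (ae_of_all _ fun _ => sq_nonneg _)

lemma integrable_log_norm_sub_sub_log_norm_mul (hf : Integrable f μ)
    (hlog : Integrable (fun y => Real.log (1 + ‖y‖) * f y) μ) (hf2 : MemLp f 2 μ) {x : E}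
    (hx : 1 ≤ ‖x‖) :
    Integrable (fun y => (Real.log ‖x - y‖ - Real.log ‖x‖) * f y) μ := by
  have hk : Integrable (fun y => log⁺ ‖x - y‖⁻¹ * |f y|) μ :=
    (memLp_posLog_inv_norm_sub x).integrable_mul hf2.abs
  refine (hk.add (integrable_log_one_add_norm_add_const_mul_abs hf hlog (Real.log 2))).mono'
    (aestronglyMeasurable_log_norm_sub_sub_log_norm_mul hf.aestronglyMeasurable x)
    (ae_of_all _ fun y => norm_log_norm_sub_sub_log_norm_mul_le hx (f y))

lemma tendsto_setIntegral_half_lt_norm_log_norm_sub_sub_log_norm_mul (hf : Integrable f μ)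
    (hlog : Integrable (fun y => Real.log (1 + ‖y‖) * f y) μ) (hf2 : MemLp f 2 μ) :
    Tendsto (fun x => ∫ y in {y | ‖x‖ / 2 < ‖y‖}, (Real.log ‖x - y‖ - Real.log ‖x‖) * f y ∂μ)
      (cobounded E) (𝓝 0) := by
  have hhalf : Tendsto (fun x : E => ‖x‖ / 2) (cobounded E) atTop :=
    tendsto_norm_cobounded_atTop.atTop_div_const two_pos
  have hweight := integrable_log_one_add_norm_add_const_mul_abs hf hlog (Real.log 2)
  have htail_sq := (tendsto_setIntegral_lt_norm_atTop hf2.integrable_sq).comp hhalf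
  have htail_weight := (tendsto_setIntegral_lt_norm_atTop hweight).comp hhalf
  set C := ∫ z, (log⁺ ‖z‖⁻¹) ^ 2 ∂μ
  refine squeeze_zero_norm' (a := fun x => √C * √(∫ y in {y | ‖x‖ / 2 < ‖y‖}, f y ^ 2 ∂μ)
    + ∫ y in {y | ‖x‖ / 2 < ‖y‖}, (Real.log (1 + ‖y‖) + Real.log 2) * |f y| ∂μ) ?_ ?_
  · filter_upwards [tendsto_norm_cobounded_atTop.eventually_ge_atTop 1] with x hx
    set T := {y : E | ‖x‖ / 2 < ‖y‖}
    have hk : Integrable (fun y => log⁺ ‖x - y‖⁻¹ * |f y|) μ :=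
      (memLp_posLog_inv_norm_sub x).integrable_mul hf2.abs
    calc ‖∫ y in T, (Real.log ‖x - y‖ - Real.log ‖x‖) * f y ∂μ‖
        ≤ ∫ y in T, ‖(Real.log ‖x - y‖ - Real.log ‖x‖) * f y‖ ∂μ :=
          norm_integral_le_integral_norm _
      _ ≤ ∫ y in T, (log⁺ ‖x - y‖⁻¹ * |f y|
            + (Real.log (1 + ‖y‖) + Real.log 2) * |f y|) ∂μ := by
          refine setIntegral_mono
            (integrable_log_norm_sub_sub_log_norm_mul hf hlog hf2 hx).norm.integrableOn
            (hk.add hweight).integrableOn fun y => norm_log_norm_sub_sub_log_norm_mul_le hx (f y)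
      _ = ∫ y in T, log⁺ ‖x - y‖⁻¹ * |f y| ∂μ
            + ∫ y in T, (Real.log (1 + ‖y‖) + Real.log 2) * |f y| ∂μ :=
          integral_add hk.integrableOn hweight.integrableOn
      _ ≤ _ := by gcongr; exact setIntegral_posLog_inv_norm_sub_mul_abs_le hf2 x T
  · simpa using (tendsto_const_nhds.mul
      ((Real.continuous_sqrt.tendsto 0).comp htail_sq)).add htail_weight

theorem tendsto_integral_log_norm_sub_mul_sub_log_norm_mul_integral (hf : Integrable f μ)
    (hlog : Integrable (fun y => Real.log (1 + ‖y‖) * f y) μ) (hf2 : MemLp f 2 μ) :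
    Tendsto (fun x => ∫ y, Real.log ‖x - y‖ * f y ∂μ - Real.log ‖x‖ * ∫ y, f y ∂μ)
      (cobounded E) (𝓝 0) := by
  have hsplit := (tendsto_setIntegral_half_lt_norm_log_norm_sub_sub_log_norm_mul hf hlog hf2).add
    (tendsto_setIntegral_norm_le_half_log_norm_sub_sub_log_norm_mul hf hlog)
  rw [add_zero] at hsplit
  refine hsplit.congr' ?_
  filter_upwards [tendsto_norm_cobounded_atTop.eventually_ge_atTop 1] with x hx
  have hD := integrable_log_norm_sub_sub_log_norm_mul hf hlog hf2 hx
  have hlogf : Integrable (fun y => Real.log ‖x - y‖ * f y) μ :=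
    (hD.add (hf.const_mul (Real.log ‖x‖))).congr
      (ae_of_all _ fun y => by simp only [Pi.add_apply]; ring)
  rw [integral_add_compl (measurableSet_lt measurable_const continuous_norm.measurable) hD,
    ← integral_const_mul, ← integral_sub hlogf (hf.const_mul _)]
  congr 1 with y
  ring

end Potential

theorem stmt18_general (p : ℝ) (u : EuclideanSpace ℝ (Fin 2) → ℝ)
    (h1 : Integrable (fun y => |u y| ^ p))
    (h2 : Integrable (fun y => Real.log (1 + ‖y‖) * |u y| ^ p))
    (h3 : Integrable (fun y => |u y| ^ (2 * p))) :
    Tendsto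
      (fun x : EuclideanSpace ℝ (Fin 2) =>
        (1 / (2 * Real.pi)) * (∫ y, Real.log ‖x - y‖ * |u y| ^ p)
          - (1 / (2 * Real.pi)) * Real.log ‖x‖ * ∫ y, |u y| ^ p)
      (cocompact (EuclideanSpace ℝ (Fin 2))) (nhds 0) := by
  have hsq : Integrable (fun y => (|u y| ^ p) ^ 2) :=
    h3.congr (ae_of_all _ fun y => by
      dsimp only
      rw [mul_comm, Real.rpow_mul (abs_nonneg _), Real.rpow_two])
  have hf2 : MemLp (fun y => |u y| ^ p) 2 :=
    (memLp_two_iff_integrable_sq h1.aestronglyMeasurable).2 hsq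
  have key := (tendsto_integral_log_norm_sub_mul_sub_log_norm_mul_integral h1 h2 hf2).const_mul
    (1 / (2 * Real.pi))
  rw [mul_zero, Metric.cobounded_eq_cocompact] at key
  exact key.congr fun x => by ring

/-- Asymptotics of the logarithmic potential: with
`w(x) = (1/2π)∫ log|x−y| |u(y)|^p dy`, one has
`w(x) − (1/2π) log|x| ∫|u|^p → 0` as `|x| → ∞`. -/
theorem stmt18 (p : ℝ) (hp : 1 ≤ p) (u : EuclideanSpace ℝ (Fin 2) → ℝ)
    (hc : Continuous u)
    (h1 : Integrable (fun y => |u y| ^ p))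
    (h2 : Integrable (fun y => Real.log (1 + ‖y‖) * |u y| ^ p))
    (h3 : Integrable (fun y => |u y| ^ (2 * p))) :
    Tendsto
      (fun x : EuclideanSpace ℝ (Fin 2) =>
        (1 / (2 * Real.pi)) * (∫ y, Real.log ‖x - y‖ * |u y| ^ p)
          - (1 / (2 * Real.pi)) * Real.log ‖x‖ * ∫ y, |u y| ^ p)
      (cocompact (EuclideanSpace ℝ (Fin 2))) (nhds 0) :=
  stmt18_general p u h1 h2 h3
end
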